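/- Let p_t(x) := e^{−x²/(2t)}/√(2πt) for t > 0 and x ∈ ℝ be the heat kernel. Then for every α with 0 < α < 1/2, lim_{t→∞} √(π/t)·∫₀ᵗ p_{2s}(t^α) ds = 1. -/

import Mathlib

open Real Set MeasureTheory Filter

noncomputable section

/-- The heat kernel `p_t(x) = e^{-x²/(2t)} / √(2πt)` on `ℝ`. -/
def heatKernel (t x : ℝ) : ℝ := Real.exp (-(x ^ 2) / (2 * t)) / Real.sqrt (2 * Real.pi * t)

lemma hk_eq (s x : ℝ) : heatKernel (2 * s) x
    = Real.exp (-(x ^ 2) / (4 * s)) * (Real.sqrt (4 * Real.pi * s))⁻¹ := by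
  simp only [heatKernel]
  rw [show 2 * (2 * s) = 4 * s by ring, show 2 * Real.pi * (2 * s) = 4 * Real.pi * s by ring,
    div_eq_mul_inv]

lemma sqrt4pis (s : ℝ) : Real.sqrt (4 * Real.pi * s) = 2 * Real.sqrt Real.pi * Real.sqrt s := by
  have h4 : Real.sqrt 4 = 2 := by
    rw [show (4:ℝ) = 2 ^ 2 by norm_num, Real.sqrt_sq (by norm_num)]
  rw [show (4:ℝ) * Real.pi * s = 4 * Real.pi * s by ring, Real.sqrt_mul (by positivity),
    Real.sqrt_mul (by norm_num : (0:ℝ) ≤ 4), h4]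

lemma inv_sqrt_eq {a b : ℝ} (ha : 0 ≤ a) :
    ∀ s ∈ Ioo a b, (Real.sqrt (4 * Real.pi * s))⁻¹
      = (2 * Real.sqrt Real.pi)⁻¹ * s ^ (-(1/2) : ℝ) := by
  intro s hs
  have hs0 : 0 ≤ s := le_of_lt (lt_of_le_of_lt ha hs.1)
  rw [sqrt4pis, mul_inv]
  congr 1
  rw [Real.sqrt_eq_rpow, ← Real.rpow_neg hs0]

lemma integrableOn_inv_sqrt (a b : ℝ) (ha : 0 ≤ a) :
    IntegrableOn (fun s => (Real.sqrt (4 * Real.pi * s))⁻¹) (Ioo a b) := by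
  have h : IntegrableOn (fun s : ℝ => (2 * Real.sqrt Real.pi)⁻¹ * s ^ (-(1/2) : ℝ)) (Ioo a b) := by
    rcases le_or_gt a b with hab | hab
    · have := (intervalIntegral.intervalIntegrable_rpow' (a := a) (b := b) (r := -(1/2))
        (by norm_num)).def'
      rw [uIoc_of_le hab] at this
      exact ((this.mono_set Ioo_subset_Ioc_self).const_mul _)
    · simp [Ioo_eq_empty (not_lt.2 hab.le)]
  exact h.congr_fun (fun s hs => (inv_sqrt_eq ha s hs).symm) measurableSet_Ioo

lemma integral_inv_sqrt (a b : ℝ) (ha : 0 ≤ a) (hab : a ≤ b) :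
    ∫ s in Ioo a b, (Real.sqrt (4 * Real.pi * s))⁻¹
      = (Real.sqrt b - Real.sqrt a) / Real.sqrt Real.pi := by
  rw [setIntegral_congr_fun measurableSet_Ioo (inv_sqrt_eq ha), integral_const_mul _ _,
    ← integral_Ioc_eq_integral_Ioo, ← intervalIntegral.integral_of_le hab,
    integral_rpow (Or.inl (by norm_num))]
  have hb : (0:ℝ) ≤ b := ha.trans hab
  rw [show -(1/2) + 1 = (1/2 : ℝ) by norm_num, ← Real.sqrt_eq_rpow, ← Real.sqrt_eq_rpow]
  have hπ : Real.sqrt Real.pi ≠ 0 := by positivity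
  field_simp

lemma measurable_hk (x : ℝ) : Measurable fun s : ℝ => heatKernel (2 * s) x := by
  unfold heatKernel
  fun_prop

lemma hk_nonneg (t x : ℝ) : 0 ≤ heatKernel t x := by
  unfold heatKernel
  positivity

lemma integrableOn_hk (x b : ℝ) :
    IntegrableOn (fun s => heatKernel (2 * s) x) (Ioo 0 b) := by
  apply Integrable.mono (integrableOn_inv_sqrt 0 b le_rfl)
    ((measurable_hk x).aestronglyMeasurable)
  filter_upwards [ae_restrict_mem measurableSet_Ioo] with s hs
  rw [Real.norm_of_nonneg (hk_nonneg _ _), Real.norm_of_nonneg (by positivity), hk_eq]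
  have h1 : Real.exp (-(x ^ 2) / (4 * s)) ≤ 1 := by
    rw [Real.exp_le_one_iff]
    have : 0 < 4 * s := by nlinarith [hs.1]
    apply div_nonpos_of_nonpos_of_nonneg <;> nlinarith [sq_nonneg x]
  calc Real.exp (-(x ^ 2) / (4 * s)) * (Real.sqrt (4 * Real.pi * s))⁻¹
      ≤ 1 * (Real.sqrt (4 * Real.pi * s))⁻¹ := by
        apply mul_le_mul_of_nonneg_right h1 (by positivity)
    _ = (Real.sqrt (4 * Real.pi * s))⁻¹ := one_mul _

/-- property P1: for `0 < α < 1/2`,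
`√(π/t) · ∫₀ᵗ p_{2s}(t^α) ds → 1` as `t → ∞`. -/
theorem heatKernel_corr_tendsto_one (α : ℝ) (hα0 : 0 < α) (hα : α < 1 / 2) :
    Filter.Tendsto
      (fun t : ℝ => Real.sqrt (Real.pi / t) * ∫ s in Ioo (0 : ℝ) t, heatKernel (2 * s) (t ^ α))
      Filter.atTop (nhds 1) := by
  set L : ℝ → ℝ := fun t =>
    Real.exp (-(t ^ (α - 1/2)) / 4) * (1 - t ^ ((α - 1/2)/2)) with hL
  have h1 : Tendsto (fun t : ℝ => t ^ (α - 1/2)) atTop (nhds 0) := by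
    have h := tendsto_rpow_neg_atTop (y := 1/2 - α) (show 0 < 1/2 - α by linarith)
    simp only [show -(1/2 - α) = α - 1/2 from by ring] at h
    exact h
  have h2 : Tendsto (fun t : ℝ => t ^ ((α - 1/2)/2)) atTop (nhds 0) := by
    have h := tendsto_rpow_neg_atTop (y := (1/2 - α)/2) (show 0 < (1/2 - α)/2 by linarith)
    simp only [show -((1/2 - α)/2) = (α - 1/2)/2 from by ring] at h
    exact h
  have hLtendsto : Tendsto L atTop (nhds 1) := by
    have he : Tendsto (fun t : ℝ => Real.exp (-(t ^ (α - 1/2)) / 4)) atTop (nhds 1) := by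
      have hin : Tendsto (fun t : ℝ => -(t ^ (α - 1/2)) / 4) atTop (nhds 0) := by
        have := (h1.neg).div_const 4
        simpa using this
      have := (Real.continuous_exp.tendsto 0).comp hin
      simpa [Function.comp_def] using this
    have h3 := he.mul ((tendsto_const_nhds : Tendsto (fun _ : ℝ => (1:ℝ)) atTop (nhds 1)).sub h2)
    rw [hL]
    simpa only [one_mul, mul_one, sub_zero] using h3
  apply tendsto_of_tendsto_of_tendsto_of_le_of_le' hLtendsto tendsto_const_nhds
  · -- lower bound
    filter_upwards [eventually_ge_atTop (1:ℝ)] with t ht1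
    have ht : (0:ℝ) < t := by linarith
    set a := t ^ (α + 1/2) with ha_def
    have ha0 : 0 < a := Real.rpow_pos_of_pos ht _
    have hat : a ≤ t := by
      calc a ≤ t ^ (1:ℝ) := Real.rpow_le_rpow_of_exponent_le ht1 (by linarith)
        _ = t := Real.rpow_one t
    set c := Real.exp (-(t ^ (α - 1/2)) / 4) with hc_def
    have hpt : ∀ s ∈ Ioo a t,
        c * (Real.sqrt (4 * Real.pi * s))⁻¹ ≤ heatKernel (2 * s) (t ^ α) := by
      intro s hs
      rw [hk_eq]
      apply mul_le_mul_of_nonneg_right _ (by positivity)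
      rw [hc_def, Real.exp_le_exp]
      have hs0 : 0 < s := ha0.trans hs.1
      have hsq : (t ^ α) ^ 2 = t ^ (α + α) := by rw [sq, ← Real.rpow_add ht]
      have h6 : t ^ (α + α) / a = t ^ (α - 1/2) := by
        rw [ha_def, ← Real.rpow_sub ht]; ring_nf
      have h5 : t ^ (α + α) / s ≤ t ^ (α + α) / a :=
        div_le_div_of_nonneg_left (Real.rpow_pos_of_pos ht _).le ha0 hs.1.le
      have hkey : (t ^ α) ^ 2 / (4 * s) ≤ t ^ (α - 1/2) / 4 := by
        rw [hsq]
        calc t ^ (α + α) / (4 * s) = (t ^ (α + α) / s) / 4 := by ring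
          _ ≤ (t ^ (α + α) / a) / 4 := by linarith
          _ = t ^ (α - 1/2) / 4 := by rw [h6]
      rw [neg_div, neg_div, neg_le_neg_iff]
      exact hkey
    have hsub : Ioo a t ⊆ Ioo 0 t := Ioo_subset_Ioo ha0.le le_rfl
    have step1 : ∫ s in Ioo a t, c * (Real.sqrt (4 * Real.pi * s))⁻¹
        ≤ ∫ s in Ioo a t, heatKernel (2 * s) (t ^ α) :=
      setIntegral_mono_on ((integrableOn_inv_sqrt a t ha0.le).const_mul _)
        ((integrableOn_hk _ t).mono_set hsub) measurableSet_Ioo hpt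
    have step2 : ∫ s in Ioo a t, heatKernel (2 * s) (t ^ α)
        ≤ ∫ s in Ioo (0:ℝ) t, heatKernel (2 * s) (t ^ α) :=
      setIntegral_mono_set (integrableOn_hk _ t)
        (Eventually.of_forall fun s => hk_nonneg _ _) hsub.eventuallyLE
    have hval : ∫ s in Ioo a t, c * (Real.sqrt (4 * Real.pi * s))⁻¹
        = c * ((Real.sqrt t - Real.sqrt a) / Real.sqrt Real.pi) := by
      rw [integral_const_mul _ _, integral_inv_sqrt a t ha0.le hat]
    have hLeq : L t = Real.sqrt (Real.pi / t)
        * (c * ((Real.sqrt t - Real.sqrt a) / Real.sqrt Real.pi)) := by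
      have hsa : Real.sqrt a = t ^ ((α - 1/2)/2) * t ^ ((1:ℝ)/2) := by
        rw [ha_def, Real.sqrt_eq_rpow, ← Real.rpow_mul ht.le, ← Real.rpow_add ht]
        norm_num
        ring_nf
      have hst : Real.sqrt t = t ^ ((1:ℝ)/2) := Real.sqrt_eq_rpow t
      have hpt2 : Real.sqrt (Real.pi / t) = Real.sqrt Real.pi / Real.sqrt t :=
        Real.sqrt_div Real.pi_pos.le t
      have hπ : Real.sqrt Real.pi ≠ 0 := by positivity
      have hth : (0:ℝ) < t ^ ((1:ℝ)/2) := Real.rpow_pos_of_pos ht _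
      rw [hL, hc_def, hpt2, hsa, hst]
      field_simp
    calc L t = Real.sqrt (Real.pi / t)
          * (c * ((Real.sqrt t - Real.sqrt a) / Real.sqrt Real.pi)) := hLeq
      _ = Real.sqrt (Real.pi / t)
          * ∫ s in Ioo a t, c * (Real.sqrt (4 * Real.pi * s))⁻¹ := by rw [hval]
      _ ≤ Real.sqrt (Real.pi / t) * ∫ s in Ioo a t, heatKernel (2 * s) (t ^ α) :=
          mul_le_mul_of_nonneg_left step1 (Real.sqrt_nonneg _)
      _ ≤ Real.sqrt (Real.pi / t) * ∫ s in Ioo (0:ℝ) t, heatKernel (2 * s) (t ^ α) :=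
          mul_le_mul_of_nonneg_left step2 (Real.sqrt_nonneg _)
  · -- upper bound
    filter_upwards [eventually_ge_atTop (1:ℝ)] with t ht1
    have ht : (0:ℝ) < t := by linarith
    have hmono : ∫ s in Ioo (0:ℝ) t, heatKernel (2 * s) (t ^ α)
        ≤ ∫ s in Ioo (0:ℝ) t, (Real.sqrt (4 * Real.pi * s))⁻¹ := by
      apply setIntegral_mono_on (integrableOn_hk _ _) (integrableOn_inv_sqrt 0 t le_rfl)
        measurableSet_Ioo
      intro s hs
      rw [hk_eq]
      have h1 : Real.exp (-((t ^ α) ^ 2) / (4 * s)) ≤ 1 := by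
        rw [Real.exp_le_one_iff]
        apply div_nonpos_of_nonpos_of_nonneg
        · nlinarith [sq_nonneg (t ^ α)]
        · nlinarith [hs.1]
      calc Real.exp (-((t ^ α) ^ 2) / (4 * s)) * (Real.sqrt (4 * Real.pi * s))⁻¹
          ≤ 1 * (Real.sqrt (4 * Real.pi * s))⁻¹ :=
            mul_le_mul_of_nonneg_right h1 (by positivity)
        _ = (Real.sqrt (4 * Real.pi * s))⁻¹ := one_mul _
    calc Real.sqrt (Real.pi / t) * ∫ s in Ioo (0:ℝ) t, heatKernel (2 * s) (t ^ α)
        ≤ Real.sqrt (Real.pi / t) * ∫ s in Ioo (0:ℝ) t, (Real.sqrt (4 * Real.pi * s))⁻¹ :=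
          mul_le_mul_of_nonneg_left hmono (Real.sqrt_nonneg _)
      _ = 1 := by
          rw [integral_inv_sqrt 0 t le_rfl ht.le, Real.sqrt_zero, Real.sqrt_div Real.pi_pos.le]
          have h1 : Real.sqrt t ≠ 0 := by positivity
          have h2 : Real.sqrt Real.pi ≠ 0 := by positivity
          field_simp
          ring
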